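/- Let p(n,a) denote the number of a-parking functions of length n. Then p(n,a) = Σ_{k=0}^{n} C(n,k) · p(n-k, a+k-1), with boundary conditions p(n,0)=0 for n ≥ 1 and p(0,a)=1 for a ≥ 0. -/

import Mathlib

/-- The weakly increasing sorted version of a vector of naturals. -/
def sortPF {n : ℕ} (p : Fin n → ℕ) : List ℕ :=
  Multiset.sort (↑(List.ofFn p)) (· ≤ ·)

/-- `p` is an `a`-parking function of length `n`: all entries are positive and the
`i`-th entry (0-based) of the sorted version is at most `a + i` (i.e. `a + i - 1` 1-based). -/
def IsAPF (a : ℕ) {n : ℕ} (p : Fin n → ℕ) : Prop :=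
  (∀ i, 1 ≤ p i) ∧ ∀ i : Fin n, (sortPF p).getD i 0 ≤ a + (i : ℕ)

/-- `p` is an ordinary parking function of length `n`. -/
def IsPF {n : ℕ} (p : Fin n → ℕ) : Prop :=
  (∀ i, 1 ≤ p i ∧ p i ≤ n) ∧ ∀ i : Fin n, (sortPF p).getD i 0 ≤ (i : ℕ) + 1

/-- The number of `a`-parking functions of length `n`. -/
noncomputable def pNum (n a : ℕ) : ℕ := Nat.card {p : Fin n → ℕ // IsAPF a p}

/-!
Classify the `a`-parking functions of length `n` by the set `s` of positions holding a `1`.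
Deleting these entries and lowering the others by one is a bijection onto the
`(a + #s - 1)`-parking functions of length `n - #s`: the sorted vector is `#s` ones followed by
the sorted remainder shifted up by one, so at the first `#s` places the condition is `1 ≤ a`,
and at place `#s + j` it is the `(a + #s - 1)`-condition at `j`. There are `C(n, k)` sets `s`
with `#s = k`.
-/

open Finset

namespace ParkingFunction

variable {n a : ℕ}

lemma length_sortPF (p : Fin n → ℕ) : (sortPF p).length = n := by
  simp [sortPF]

lemma coe_sortPF (p : Fin n → ℕ) : (sortPF p : Multiset ℕ) = univ.val.map p := by
  rw [sortPF, Multiset.sort_eq, Fin.univ_val_map]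

lemma mem_sortPF {p : Fin n → ℕ} {x : ℕ} : x ∈ sortPF p ↔ ∃ i, p i = x := by
  simp [sortPF, List.mem_ofFn]

lemma sortPF_eq_of_pairwise {p : Fin n → ℕ} {L : List ℕ} (hL : L.Pairwise (· ≤ ·))
    (hperm : (L : Multiset ℕ) = univ.val.map p) : sortPF p = L :=
  List.Perm.eq_of_pairwise' (Multiset.pairwise_sort _ _) hL
    (Multiset.coe_eq_coe.mp (by rw [coe_sortPF, hperm]))

lemma IsAPF.le_add {p : Fin n → ℕ} (hp : IsAPF a p) (i : Fin n) : p i ≤ a + n := by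
  obtain ⟨j, hj, hji⟩ := List.mem_iff_getElem.mp (mem_sortPF.mpr ⟨i, rfl⟩)
  rw [length_sortPF] at hj
  have := hp.2 ⟨j, hj⟩
  rw [List.getD_eq_getElem _ _ (by rwa [length_sortPF]), hji] at this
  omega

instance : Finite {p : Fin n → ℕ // IsAPF a p} :=
  Finite.of_injective
    (fun p i => (⟨p.1 i, Nat.lt_succ_of_le (IsAPF.le_add p.2 i)⟩ : Fin (a + n + 1)))
    fun _ _ h => Subtype.ext <| funext fun i => congrArg Fin.val (congrFun h i)

lemma not_isAPF_zero (hn : 0 < n) (p : Fin n → ℕ) : ¬ IsAPF 0 p := by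
  rintro ⟨hpos, hsort⟩
  have h0 : 0 < (sortPF p).length := by rwa [length_sortPF]
  obtain ⟨i, hi⟩ := mem_sortPF.mp (List.getElem_mem h0)
  have : (sortPF p).getD 0 0 ≤ 0 := hsort ⟨0, hn⟩
  rw [List.getD_eq_getElem _ _ h0, ← hi] at this
  exact absurd (hpos i) (by omega)

lemma pNum_zero_right (hn : 0 < n) : pNum n 0 = 0 := by
  have : IsEmpty {p : Fin n → ℕ // IsAPF 0 p} := ⟨fun p => not_isAPF_zero hn p.1 p.2⟩
  simp [pNum]

lemma pNum_zero_left : pNum 0 a = 1 := by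
  simp [pNum, IsAPF]

lemma forall_getD_replicate_append_map_succ_le_iff {L : List ℕ} {k : ℕ} (ha : 1 ≤ a) :
    (∀ i < k + L.length, (List.replicate k 1 ++ L.map (· + 1)).getD i 0 ≤ a + i) ↔
      ∀ j < L.length, L.getD j 0 ≤ a + k - 1 + j := by
  have getD_right : ∀ j < L.length,
      (List.replicate k 1 ++ L.map (· + 1)).getD (k + j) 0 = L.getD j 0 + 1 := by
    intro j hj
    rw [List.getD_append_right _ _ _ _ (by simp), List.length_replicate, Nat.add_sub_cancel_left,
      List.getD_eq_getElem _ _ (by simpa), List.getD_eq_getElem _ _ hj, List.getElem_map]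
  constructor
  · intro h j hj
    have := h (k + j) (by omega)
    rw [getD_right j hj] at this
    omega
  · intro h i hi
    rcases lt_or_ge i k with hik | hki
    · rw [List.getD_append _ _ _ _ (by simpa), List.getD_eq_getElem _ _ (by simpa),
        List.getElem_replicate]
      omega
    · obtain ⟨j, rfl⟩ := Nat.exists_eq_add_of_le hki
      have := h j (by omega)
      rw [getD_right j (by omega)]
      omega

variable (s : Finset (Fin n))

noncomputable def complEquivFin : ↥sᶜ ≃ Fin (n - #s) :=
  sᶜ.equivFin.trans (finCongr (by rw [card_compl, Fintype.card_fin]))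

def ones (p : Fin n → ℕ) : Finset (Fin n) := {i | p i = 1}

noncomputable def insertOnes (q : Fin (n - #s) → ℕ) (i : Fin n) : ℕ :=
  if h : i ∈ s then 1 else q (complEquivFin s ⟨i, mem_compl.mpr h⟩) + 1

noncomputable def deleteOnes (p : Fin n → ℕ) (j : Fin (n - #s)) : ℕ :=
  p ((complEquivFin s).symm j) - 1

variable {s} {q : Fin (n - #s) → ℕ}

lemma mem_ones {p : Fin n → ℕ} {i : Fin n} : i ∈ ones p ↔ p i = 1 := by
  simp [ones]

lemma insertOnes_of_mem {i : Fin n} (hi : i ∈ s) : insertOnes s q i = 1 := by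
  simp [insertOnes, hi]

lemma insertOnes_of_notMem {i : Fin n} (hi : i ∉ s) :
    insertOnes s q i = q (complEquivFin s ⟨i, mem_compl.mpr hi⟩) + 1 := by
  simp [insertOnes, hi]

lemma insertOnes_compl (i : ↥sᶜ) : insertOnes s q i = q (complEquivFin s i) + 1 :=
  insertOnes_of_notMem (mem_compl.mp i.2)

lemma one_le_insertOnes (i : Fin n) : 1 ≤ insertOnes s q i := by
  unfold insertOnes; split_ifs <;> omega

lemma deleteOnes_insertOnes : deleteOnes s (insertOnes s q) = q := by
  funext j
  simp [deleteOnes, insertOnes_compl]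

lemma insertOnes_deleteOnes {p : Fin n → ℕ} (hp : ∀ i, 1 ≤ p i) (hs : ones p = s) :
    insertOnes s (deleteOnes s p) = p := by
  funext i
  by_cases hi : i ∈ s
  · rw [insertOnes_of_mem hi, ← mem_ones.mp (hs ▸ hi)]
  · rw [insertOnes_of_notMem hi, deleteOnes, Equiv.symm_apply_apply]
    exact Nat.sub_add_cancel (hp i)

lemma ones_insertOnes_eq_iff : ones (insertOnes s q) = s ↔ ∀ j, 1 ≤ q j := by
  constructor
  · intro hs j
    by_contra hj
    have hmem : ((complEquivFin s).symm j : Fin n) ∈ ones (insertOnes s q) := by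
      rw [mem_ones, insertOnes_compl, Equiv.apply_symm_apply]
      omega
    rw [hs] at hmem
    exact mem_compl.mp ((complEquivFin s).symm j).2 hmem
  · intro hq
    ext i
    rw [mem_ones]
    refine ⟨fun h => ?_, insertOnes_of_mem⟩
    by_contra hi
    rw [insertOnes_of_notMem hi] at h
    have := hq (complEquivFin s ⟨i, mem_compl.mpr hi⟩)
    omega

lemma univ_val_map_insertOnes :
    univ.val.map (insertOnes s q) = Multiset.replicate #s 1 + (univ.val.map q).map (· + 1) := by
  have hsplit : (univ : Finset (Fin n)).val = s.val + sᶜ.val :=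
    congrArg val ((disjUnion_eq_union s sᶜ disjoint_compl_right).trans (union_compl s)).symm
  have hcompl : sᶜ.val = univ.val.map (Subtype.val : ↥sᶜ → Fin n) := by
    rw [← attach_eq_univ, attach_val, Multiset.attach_map_val]
  rw [hsplit, Multiset.map_add, Multiset.map_congr rfl fun i hi => insertOnes_of_mem hi,
    Multiset.map_const', card_val, hcompl, Multiset.map_map, Multiset.map_map]
  congr 1
  calc univ.val.map (insertOnes s q ∘ Subtype.val)
      = (univ.val.map (complEquivFin s)).map ((· + 1) ∘ q) := by
        rw [Multiset.map_map]
        exact Multiset.map_congr rfl fun i _ => insertOnes_compl i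
    _ = univ.val.map ((· + 1) ∘ q) := by rw [Multiset.map_univ_val_equiv]

lemma sortPF_insertOnes :
    sortPF (insertOnes s q) = List.replicate #s 1 ++ (sortPF q).map (· + 1) := by
  refine sortPF_eq_of_pairwise ?_ ?_
  · refine List.pairwise_append.mpr ⟨List.pairwise_replicate.mpr (Or.inr le_rfl),
      (Multiset.pairwise_sort _ _).map _ fun _ _ h => by omega, ?_⟩
    simp only [List.mem_replicate, List.mem_map]
    omega
  · rw [univ_val_map_insertOnes, ← Multiset.coe_add, ← Multiset.map_coe, coe_sortPF,
      Multiset.coe_replicate]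

lemma isAPF_insertOnes_and_ones_eq_iff (ha : 1 ≤ a) :
    IsAPF a (insertOnes s q) ∧ ones (insertOnes s q) = s ↔ IsAPF (a + #s - 1) q := by
  have hsort : (∀ i : Fin n, (sortPF (insertOnes s q)).getD i 0 ≤ a + i) ↔
      ∀ j : Fin (n - #s), (sortPF q).getD j 0 ≤ a + #s - 1 + j := by
    have hn : #s + (n - #s) = n := Nat.add_sub_of_le (by simpa using card_le_univ s)
    have := forall_getD_replicate_append_map_succ_le_iff (L := sortPF q) (k := #s) ha
    rw [length_sortPF, hn] at this
    simpa only [Fin.forall_iff, sortPF_insertOnes] using this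
  rw [IsAPF, IsAPF, hsort, ones_insertOnes_eq_iff]
  exact ⟨fun h => ⟨h.2, h.1.2⟩, fun h => ⟨⟨one_le_insertOnes, h.2⟩, h.1⟩⟩

variable (s)

noncomputable def onesFiberEquiv (ha : 1 ≤ a) :
    {p : Fin n → ℕ // IsAPF a p ∧ ones p = s} ≃
      {q : Fin (n - #s) → ℕ // IsAPF (a + #s - 1) q} where
  toFun p := ⟨deleteOnes s p.1, by
    rw [← isAPF_insertOnes_and_ones_eq_iff ha, insertOnes_deleteOnes p.2.1.1 p.2.2]
    exact p.2⟩
  invFun q := ⟨insertOnes s q.1, (isAPF_insertOnes_and_ones_eq_iff ha).mpr q.2⟩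
  left_inv p := Subtype.ext (insertOnes_deleteOnes p.2.1.1 p.2.2)
  right_inv q := Subtype.ext deleteOnes_insertOnes

variable {s}

lemma pNum_eq_sum_finset (ha : 1 ≤ a) :
    pNum n a = ∑ s : Finset (Fin n), pNum (n - #s) (a + #s - 1) := by
  rw [pNum, ← Nat.card_congr (Equiv.sigmaFiberEquiv fun p : {p // IsAPF a p} => ones p.1),
    Nat.card_sigma]
  refine sum_congr rfl fun s _ => ?_
  rw [pNum, ← Nat.card_congr (onesFiberEquiv s ha)]
  exact Nat.card_congr (Equiv.subtypeSubtypeEquivSubtypeInter (IsAPF a) (ones · = s))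

lemma pNum_eq_sum_choose (ha : 1 ≤ a) :
    pNum n a = ∑ k ∈ range (n + 1), n.choose k * pNum (n - k) (a + k - 1) := by
  rw [pNum_eq_sum_finset ha, ← powerset_univ,
    sum_powerset_apply_card (fun k => pNum (n - k) (a + k - 1))]
  simp only [card_univ, Fintype.card_fin, smul_eq_mul]

end ParkingFunction

open ParkingFunction in
theorem fundamental_recurrence :
    (∀ n a : ℕ, 1 ≤ a →
        pNum n a = ∑ k ∈ Finset.range (n + 1), n.choose k * pNum (n - k) (a + k - 1)) ∧
    (∀ n : ℕ, 1 ≤ n → pNum n 0 = 0) ∧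
    (∀ a : ℕ, pNum 0 a = 1) :=
  ⟨fun _ _ ha => pNum_eq_sum_choose ha, fun _ hn => pNum_zero_right hn, fun _ => pNum_zero_left⟩
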